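/- If I_P(Y; B) = 0 (Y and B are independent under P), then Uni(Y; B|F) = 0. -/

import Mathlib

open scoped BigOperators

section PID

/-- A joint probability distribution on a product of three finite types,
represented as a nonnegative function summing to one. -/
def IsDist3 {Y F B : Type*} [Fintype Y] [Fintype F] [Fintype B]
    (P : Y → F → B → ℝ) : Prop :=
  (∀ y f b, 0 ≤ P y f b) ∧ ∑ y, ∑ f, ∑ b, P y f b = 1

/-- Marginal on (Y, F). -/
def margYF {Y F B : Type*} [Fintype B] (P : Y → F → B → ℝ) (y : Y) (f : F) : ℝ :=
  ∑ b, P y f b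

/-- Marginal on (Y, B). -/
def margYB {Y F B : Type*} [Fintype F] (P : Y → F → B → ℝ) (y : Y) (b : B) : ℝ :=
  ∑ f, P y f b

/-- Marginal on (F, B). -/
def margFB {Y F B : Type*} [Fintype Y] (P : Y → F → B → ℝ) (f : F) (b : B) : ℝ :=
  ∑ y, P y f b

/-- Marginal on Y. -/
def margY {Y F B : Type*} [Fintype F] [Fintype B] (P : Y → F → B → ℝ) (y : Y) : ℝ :=
  ∑ f, ∑ b, P y f b

/-- Marginal on F. -/
def margF {Y F B : Type*} [Fintype Y] [Fintype B] (P : Y → F → B → ℝ) (f : F) : ℝ :=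
  ∑ y, ∑ b, P y f b

/-- Marginal on B. -/
def margB {Y F B : Type*} [Fintype Y] [Fintype F] (P : Y → F → B → ℝ) (b : B) : ℝ :=
  ∑ y, ∑ f, P y f b

/-- Conditional mutual information I_Q(Y ; B | F) for a joint distribution `Q`
on `Y × F × B` (natural log; `0 log 0 = 0` conventions via `Real.log 0 = 0`
and division-by-zero conventions). -/
noncomputable def condMI {Y F B : Type*} [Fintype Y] [Fintype F] [Fintype B]
    (Q : Y → F → B → ℝ) : ℝ :=
  ∑ y, ∑ f, ∑ b, Q y f b *
    Real.log ((Q y f b * margF Q f) / (margYF Q y f * margFB Q f b))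

/-- Mutual information I_P(Y ; B). -/
noncomputable def mutYB {Y F B : Type*} [Fintype Y] [Fintype F] [Fintype B]
    (P : Y → F → B → ℝ) : ℝ :=
  ∑ y, ∑ b, margYB P y b * Real.log (margYB P y b / (margY P y * margB P b))

/-- Mutual information I_P(Y ; F). -/
noncomputable def mutYF {Y F B : Type*} [Fintype Y] [Fintype F] [Fintype B]
    (P : Y → F → B → ℝ) : ℝ :=
  ∑ y, ∑ f, margYF P y f * Real.log (margYF P y f / (margY P y * margF P f))

/-- Mutual information I_P(Y ; (F, B)). -/
noncomputable def mutYFB {Y F B : Type*} [Fintype Y] [Fintype F] [Fintype B]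
    (P : Y → F → B → ℝ) : ℝ :=
  ∑ y, ∑ f, ∑ b, P y f b * Real.log (P y f b / (margY P y * margFB P f b))

/-- The feasible set Δ_P of joint distributions matching the (Y,F) and (Y,B)
marginals of `P`. -/
def Delta {Y F B : Type*} [Fintype Y] [Fintype F] [Fintype B]
    (P : Y → F → B → ℝ) : Set (Y → F → B → ℝ) :=
  {Q | IsDist3 Q ∧ (∀ y f, margYF Q y f = margYF P y f) ∧
      (∀ y b, margYB Q y b = margYB P y b)}

/-- Unique information Uni(Y ; B | F) (Bertschinger et al.):
the infimum of I_Q(Y ; B | F) over Q ∈ Δ_P. -/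
noncomputable def uni {Y F B : Type*} [Fintype Y] [Fintype F] [Fintype B]
    (P : Y → F → B → ℝ) : ℝ :=
  sInf (condMI '' Delta P)

/-- A matrix with entries in [0,1] whose rows each sum to 1. -/
def RowStochastic {F B : Type*} [Fintype B] (T : F → B → ℝ) : Prop :=
  (∀ f b, 0 ≤ T f b ∧ T f b ≤ 1) ∧ ∀ f, ∑ b, T f b = 1

end PID

private lemma log_lb {x : ℝ} (hx : 0 < x) : 1 - 1/x ≤ Real.log x := by
  have h := Real.log_le_sub_one_of_pos (inv_pos.mpr hx)
  rw [Real.log_inv] at h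
  have : 1 - x⁻¹ ≤ Real.log x := by linarith
  simpa [one_div] using this

private lemma kl_term {p q : ℝ} (hp : 0 ≤ p) (hq : 0 ≤ q) (h0 : q = 0 → p = 0) :
    p - q ≤ p * Real.log (p / q) := by
  rcases eq_or_lt_of_le hp with h | hppos
  · rw [← h]; simpa using hq
  · have hq0 : q ≠ 0 := fun hz => absurd (h0 hz) (ne_of_gt hppos)
    have hqpos : 0 < q := lt_of_le_of_ne hq (Ne.symm hq0)
    have hx : 0 < p / q := div_pos hppos hqpos
    have h1 : 1 - q / p ≤ Real.log (p / q) := by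
      have := log_lb hx
      rwa [one_div_div] at this
    have h2 := mul_le_mul_of_nonneg_left h1 (le_of_lt hppos)
    have h3 : p * (1 - q / p) = p - q := by field_simp
    linarith

private lemma kl_term_eq {p q : ℝ} (hp : 0 ≤ p) (hq : 0 ≤ q) (h0 : q = 0 → p = 0)
    (he : p * Real.log (p / q) = p - q) : p = q := by
  rcases eq_or_lt_of_le hp with h | hppos
  · rw [← h] at he ⊢
    have : q = 0 := by linarith [he]
    linarith
  · have hq0 : q ≠ 0 := fun hz => absurd (h0 hz) (ne_of_gt hppos)
    have hqpos : 0 < q := lt_of_le_of_ne hq (Ne.symm hq0)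
    by_contra hne
    have hx : 0 < p / q := div_pos hppos hqpos
    have hx1 : p / q ≠ 1 := by
      intro h1
      exact hne (by field_simp at h1; linarith)
    have hinv : (p / q)⁻¹ ≠ 1 := fun hh => hx1 (inv_eq_one.mp hh)
    have hstrict := Real.log_lt_sub_one_of_pos (inv_pos.mpr hx) hinv
    rw [Real.log_inv] at hstrict
    have hinv2 : (p / q)⁻¹ = q / p := by rw [inv_div]
    rw [hinv2] at hstrict
    -- log (p/q) > 1 - q/p
    have h1 : 1 - q / p < Real.log (p / q) := by linarith
    have h2 := mul_lt_mul_of_pos_left h1 hppos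
    have h3 : p * (1 - q / p) = p - q := by field_simp
    linarith

private lemma le_margYF {Y F B : Type*} [Fintype Y] [Fintype F] [Fintype B]
    {Q : Y → F → B → ℝ} (hQ : ∀ y f b, 0 ≤ Q y f b) (y : Y) (f : F) (b : B) :
    Q y f b ≤ margYF Q y f :=
  Finset.single_le_sum (fun b' _ => hQ y f b') (Finset.mem_univ b)

private lemma le_margFB {Y F B : Type*} [Fintype Y] [Fintype F] [Fintype B]
    {Q : Y → F → B → ℝ} (hQ : ∀ y f b, 0 ≤ Q y f b) (y : Y) (f : F) (b : B) :
    Q y f b ≤ margFB Q f b :=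
  Finset.single_le_sum (fun y' _ => hQ y' f b) (Finset.mem_univ y)

private lemma margYF_nonneg {Y F B : Type*} [Fintype Y] [Fintype F] [Fintype B]
    {Q : Y → F → B → ℝ} (hQ : ∀ y f b, 0 ≤ Q y f b) (y : Y) (f : F) :
    0 ≤ margYF Q y f :=
  Finset.sum_nonneg fun b _ => hQ y f b

private lemma margFB_nonneg {Y F B : Type*} [Fintype Y] [Fintype F] [Fintype B]
    {Q : Y → F → B → ℝ} (hQ : ∀ y f b, 0 ≤ Q y f b) (f : F) (b : B) :
    0 ≤ margFB Q f b :=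
  Finset.sum_nonneg fun y _ => hQ y f b

/-- Nonnegativity of conditional mutual information. -/
private lemma condMI_nonneg {Y F B : Type*} [Fintype Y] [Fintype F] [Fintype B]
    {Q : Y → F → B → ℝ} (hQ : IsDist3 Q) : 0 ≤ condMI Q := by
  obtain ⟨hQ0, -⟩ := hQ
  rw [condMI, Finset.sum_comm]
  apply Finset.sum_nonneg
  intro f _
  rcases eq_or_lt_of_le (Finset.sum_nonneg (fun y (_ : y ∈ Finset.univ) =>
      Finset.sum_nonneg fun b (_ : b ∈ Finset.univ) => hQ0 y f b)) with hmf | hmf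
  · -- margF Q f = 0, hence every Q y f b = 0
    have hz : ∀ y ∈ Finset.univ, ∑ b, Q y f b = 0 := by
      intro y _
      have := (Finset.sum_eq_zero_iff_of_nonneg (fun y' (_ : y' ∈ Finset.univ) =>
        Finset.sum_nonneg fun b (_ : b ∈ Finset.univ) => hQ0 y' f b)).mp hmf.symm
      exact this y (Finset.mem_univ y)
    apply le_of_eq
    symm
    apply Finset.sum_eq_zero
    intro y _
    apply Finset.sum_eq_zero
    intro b _
    have := (Finset.sum_eq_zero_iff_of_nonneg (fun b' (_ : b' ∈ Finset.univ) =>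
      hQ0 y f b')).mp (hz y (Finset.mem_univ y)) b (Finset.mem_univ b)
    simp [this]
  · have hmF : margF Q f = ∑ y, ∑ b, Q y f b := rfl
    have hmfpos : 0 < margF Q f := by rw [hmF]; exact hmf
    have key : ∀ y b, Q y f b - margYF Q y f * margFB Q f b / margF Q f ≤
        Q y f b * Real.log (Q y f b * margF Q f / (margYF Q y f * margFB Q f b)) := by
      intro y b
      have harg : Q y f b / (margYF Q y f * margFB Q f b / margF Q f) =
          Q y f b * margF Q f / (margYF Q y f * margFB Q f b) := div_div_eq_mul_div _ _ _
      rw [← harg]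
      apply kl_term (hQ0 y f b)
      · exact div_nonneg (mul_nonneg (margYF_nonneg hQ0 y f) (margFB_nonneg hQ0 f b))
          (le_of_lt hmfpos)
      · intro hz
        have hprod : margYF Q y f * margFB Q f b = 0 := by
          rcases div_eq_zero_iff.mp hz with h | h
          · exact h
          · exact absurd h (ne_of_gt hmfpos)
        rcases mul_eq_zero.mp hprod with h | h
        · exact le_antisymm (h ▸ le_margYF hQ0 y f b) (hQ0 y f b)
        · exact le_antisymm (h ▸ le_margFB hQ0 y f b) (hQ0 y f b)
    have hsum : ∑ y, ∑ b, (Q y f b - margYF Q y f * margFB Q f b / margF Q f) ≤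
        ∑ y, ∑ b, Q y f b * Real.log (Q y f b * margF Q f /
          (margYF Q y f * margFB Q f b)) := by
      apply Finset.sum_le_sum
      intro y _
      exact Finset.sum_le_sum fun b _ => key y b
    have heq : ∑ y, ∑ b, (Q y f b - margYF Q y f * margFB Q f b / margF Q f) = 0 := by
      have e1 : ∑ y, ∑ b, (Q y f b - margYF Q y f * margFB Q f b / margF Q f) =
          (∑ y, ∑ b, Q y f b) - (∑ y, margYF Q y f) * (∑ b, margFB Q f b) / margF Q f := by
        rw [Finset.sum_mul, Finset.sum_div, ← Finset.sum_sub_distrib]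
        refine Finset.sum_congr rfl fun y _ => ?_
        rw [Finset.mul_sum, Finset.sum_div, ← Finset.sum_sub_distrib]
      have e2 : ∑ y, margYF Q y f = margF Q f := rfl
      have e3 : ∑ b, margFB Q f b = margF Q f := by
        rw [margF, Finset.sum_comm]; rfl
      rw [e1, e2, e3, ← hmF]
      field_simp
      ring
    linarith

/-- Sum of nonneg terms over a double sum is zero iff each is. -/
private lemma double_sum_eq_zero {Y B : Type*} [Fintype Y] [Fintype B]
    {g : Y → B → ℝ} (hg : ∀ y b, 0 ≤ g y b) (h : ∑ y, ∑ b, g y b = 0) :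
    ∀ y b, g y b = 0 := by
  intro y b
  have h1 := (Finset.sum_eq_zero_iff_of_nonneg (fun y' (_ : y' ∈ Finset.univ) =>
    Finset.sum_nonneg fun b' (_ : b' ∈ Finset.univ) => hg y' b')).mp h y (Finset.mem_univ y)
  exact (Finset.sum_eq_zero_iff_of_nonneg (fun b' (_ : b' ∈ Finset.univ) =>
    hg y b')).mp h1 b (Finset.mem_univ b)

/-- if I_P(Y;B) = 0 then Uni(Y;B|F) = 0. -/
theorem stmt5 {Y F B : Type*} [Fintype Y] [Fintype F] [Fintype B]
    (P : Y → F → B → ℝ) (hP : IsDist3 P) (h : mutYB P = 0) :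
    uni P = 0 := by
  obtain ⟨hP0, hP1⟩ := hP
  -- total masses
  have hsumYB : ∑ y, ∑ b, margYB P y b = 1 := by
    simp only [margYB]
    rw [← hP1]
    exact Finset.sum_congr rfl fun y _ => Finset.sum_comm
  have hsumY : ∑ y, margY P y = 1 := hP1
  have hsumB : ∑ b, margB P b = 1 := by
    simp only [margB]
    rw [← hP1]
    rw [Finset.sum_comm]
    exact Finset.sum_congr rfl fun y _ => Finset.sum_comm
  have hmargYBnn : ∀ y b, 0 ≤ margYB P y b :=
    fun y b => Finset.sum_nonneg fun f _ => hP0 y f b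
  have hmargYnn : ∀ y, 0 ≤ margY P y :=
    fun y => Finset.sum_nonneg fun f _ => Finset.sum_nonneg fun b _ => hP0 y f b
  have hmargBnn : ∀ b, 0 ≤ margB P b :=
    fun b => Finset.sum_nonneg fun y _ => Finset.sum_nonneg fun f _ => hP0 y f b
  have hmargYFnn : ∀ y f, 0 ≤ margYF P y f :=
    fun y f => Finset.sum_nonneg fun b _ => hP0 y f b
  have hYBleY : ∀ y b, margYB P y b ≤ margY P y := by
    intro y b
    apply Finset.sum_le_sum
    intro f _
    exact Finset.single_le_sum (fun b' _ => hP0 y f b') (Finset.mem_univ b)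
  have hzero : ∀ y b, margY P y * margB P b = 0 → margYB P y b = 0 := by
    intro y b hz
    rcases mul_eq_zero.mp hz with hy | hb
    · exact le_antisymm (hy ▸ hYBleY y b) (hmargYBnn y b)
    · have hle : margYB P y b ≤ margB P b :=
        Finset.single_le_sum (f := fun y' => ∑ f, P y' f b)
          (fun y' _ => Finset.sum_nonneg fun f _ => hP0 y' f b) (Finset.mem_univ y)
      exact le_antisymm (hb ▸ hle) (hmargYBnn y b)
  -- independence from mutYB = 0
  have hind : ∀ y b, margYB P y b = margY P y * margB P b := by
    set g : Y → B → ℝ := fun y b =>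
      margYB P y b * Real.log (margYB P y b / (margY P y * margB P b)) -
        (margYB P y b - margY P y * margB P b) with hg
    have hgnn : ∀ y b, 0 ≤ g y b := by
      intro y b
      have := kl_term (hmargYBnn y b) (mul_nonneg (hmargYnn y) (hmargBnn b)) (hzero y b)
      simp only [hg]
      linarith
    have hgsum : ∑ y, ∑ b, g y b = 0 := by
      have e1 : ∑ y, ∑ b, g y b = mutYB P -
          ((∑ y, ∑ b, margYB P y b) - ∑ y, ∑ b, margY P y * margB P b) := by
        simp only [hg, mutYB, Finset.sum_sub_distrib]
      have e2 : ∑ y, ∑ b, margY P y * margB P b = 1 := by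
        rw [← hsumY]
        refine Finset.sum_congr rfl fun y _ => ?_
        rw [← Finset.mul_sum, hsumB, mul_one]
      rw [e1, e2, hsumYB, h]
      ring
    intro y b
    have hg0 := double_sum_eq_zero hgnn hgsum y b
    simp only [hg] at hg0
    exact kl_term_eq (hmargYBnn y b) (mul_nonneg (hmargYnn y) (hmargBnn b)) (hzero y b)
      (by linarith)
  -- the product coupling
  set Q0 : Y → F → B → ℝ := fun y f b => margYF P y f * margB P b with hQ0def
  have hQ0nn : ∀ y f b, 0 ≤ Q0 y f b :=
    fun y f b => mul_nonneg (hmargYFnn y f) (hmargBnn b)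
  have hQ0YF : ∀ y f, margYF Q0 y f = margYF P y f := by
    intro y f
    show ∑ b, margYF P y f * margB P b = margYF P y f
    rw [← Finset.mul_sum, hsumB, mul_one]
  have hmargYeq : ∀ y, ∑ f, margYF P y f = margY P y := fun y => rfl
  have hQ0YB : ∀ y b, margYB Q0 y b = margYB P y b := by
    intro y b
    show ∑ f, margYF P y f * margB P b = margYB P y b
    rw [← Finset.sum_mul, hmargYeq, ← hind]
  have hQ0sum : ∑ y, ∑ f, ∑ b, Q0 y f b = 1 := by
    have : ∀ y f, ∑ b, Q0 y f b = margYF P y f := hQ0YF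
    calc ∑ y, ∑ f, ∑ b, Q0 y f b = ∑ y, ∑ f, margYF P y f :=
          Finset.sum_congr rfl fun y _ => Finset.sum_congr rfl fun f _ => this y f
      _ = ∑ y, margY P y := Finset.sum_congr rfl fun y _ => hmargYeq y
      _ = 1 := hsumY
  have hQ0dist : IsDist3 Q0 := ⟨hQ0nn, hQ0sum⟩
  have hQ0mem : Q0 ∈ Delta P := ⟨hQ0dist, hQ0YF, hQ0YB⟩
  -- condMI Q0 = 0
  have hmargFeq : ∀ f, margF Q0 f = margF P f := by
    intro f
    show ∑ y, ∑ b, margYF P y f * margB P b = margF P f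
    calc ∑ y, ∑ b, margYF P y f * margB P b = ∑ y, margYF P y f * ∑ b, margB P b :=
          Finset.sum_congr rfl fun y _ => (Finset.mul_sum _ _ _).symm
      _ = ∑ y, margYF P y f := by rw [hsumB]; simp
      _ = margF P f := rfl
  have hmargFBeq : ∀ f b, margFB Q0 f b = margF P f * margB P b := by
    intro f b
    show ∑ y, margYF P y f * margB P b = margF P f * margB P b
    rw [← Finset.sum_mul]
    rfl
  have hYFleF : ∀ y f, margYF P y f ≤ margF P f := by
    intro y f
    exact Finset.single_le_sum (f := fun y' => margYF P y' f)
      (fun y' _ => hmargYFnn y' f) (Finset.mem_univ y)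
  have hcond0 : condMI Q0 = 0 := by
    rw [condMI]
    apply Finset.sum_eq_zero
    intro y _
    apply Finset.sum_eq_zero
    intro f _
    apply Finset.sum_eq_zero
    intro b _
    rcases eq_or_lt_of_le (hQ0nn y f b) with hz | hpos
    · rw [← hz]; ring
    · have hYF : 0 < margYF P y f := by
        rcases (mul_pos_iff.mp (show (0:ℝ) < margYF P y f * margB P b from hpos)) with
          ⟨h1, _⟩ | ⟨h1, _⟩
        · exact h1
        · exact absurd h1 (not_lt.mpr (hmargYFnn y f))
      have hB : 0 < margB P b := by
        rcases (mul_pos_iff.mp (show (0:ℝ) < margYF P y f * margB P b from hpos)) with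
          ⟨_, h2⟩ | ⟨_, h2⟩
        · exact h2
        · exact absurd h2 (not_lt.mpr (hmargBnn b))
      have hF : 0 < margF P f := lt_of_lt_of_le hYF (hYFleF y f)
      have harg : Q0 y f b * margF Q0 f / (margYF Q0 y f * margFB Q0 f b) = 1 := by
        rw [hmargFeq, hQ0YF, hmargFBeq]
        show margYF P y f * margB P b * margF P f /
          (margYF P y f * (margF P f * margB P b)) = 1
        field_simp
      rw [harg, Real.log_one, mul_zero]
  -- conclude
  have hmem : (0:ℝ) ∈ condMI '' Delta P := ⟨Q0, hQ0mem, hcond0⟩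
  have hlb : ∀ x ∈ condMI '' Delta P, (0:ℝ) ≤ x := by
    rintro x ⟨Q, hQ, rfl⟩
    exact condMI_nonneg hQ.1
  exact le_antisymm (csInf_le ⟨0, hlb⟩ hmem) (le_csInf ⟨0, hmem⟩ hlb)
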